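/- Diagonalization of the Szegedy reflection by a block-diagonal unitary: let U = Σ_{i=0}^{N−1} e_i e_i† ⊗ U_i, where each U_i is an N×N unitary matrix, and suppose there is a fixed b ∈ {0,…,N−1} such that U_i φ_i = e_b for all i. Then U(2Π − I)U† = I_N ⊗ (2 e_b e_b† − I_N). -/

import Mathlib

open Matrix BigOperators

/-- The `i`-th column state of the transition matrix `P`: `(φ_i)_j = √(P_{j,i})`. -/
noncomputable def colState {N : ℕ} (P : Matrix (Fin N) (Fin N) ℝ) (i : Fin N) :
    Fin N → ℂ :=
  fun j => (Real.sqrt (P j i) : ℂ)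

/-- The `i`-th projector state `ψ_i = e_i ⊗ φ_i ∈ ℂ^N ⊗ ℂ^N`. -/
noncomputable def projState {N : ℕ} (P : Matrix (Fin N) (Fin N) ℝ) (i : Fin N) :
    Fin N × Fin N → ℂ :=
  fun p => (if p.1 = i then 1 else 0) * colState P i p.2

/-- The projection `Π = Σ_i ψ_i ψ_i†`, as a matrix on `ℂ^N ⊗ ℂ^N`. -/
noncomputable def szegedyProj {N : ℕ} (P : Matrix (Fin N) (Fin N) ℝ) :
    Matrix (Fin N × Fin N) (Fin N × Fin N) ℂ :=
  ∑ i : Fin N,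
    Matrix.of (fun p q => projState P i p * (starRingEnd ℂ) (projState P i q))

/-- The block-diagonal operator `U = Σ_i e_i e_i† ⊗ U_i` on `ℂ^N ⊗ ℂ^N`. -/
def blockDiag {N : ℕ} (Ui : Fin N → Matrix (Fin N) (Fin N) ℂ) :
    Matrix (Fin N × Fin N) (Fin N × Fin N) ℂ :=
  Matrix.of (fun p q => if p.1 = q.1 then Ui p.1 p.2 q.2 else 0)

/-- The diagonal operator `D = I_N ⊗ (2 e_b e_b† − I_N)` on `ℂ^N ⊗ ℂ^N`. -/
def diagD (N : ℕ) (b : Fin N) : Matrix (Fin N × Fin N) (Fin N × Fin N) ℂ :=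
  Matrix.of (fun p q =>
    (if p.1 = q.1 then 1 else 0) *
      (2 * (if p.2 = b then 1 else 0) * (if q.2 = b then 1 else 0) -
        (if p.2 = q.2 then 1 else 0)))

/-! Both sides are block diagonal, `Π` with blocks `φ_i φ_i†`, so the identity reduces to one block:
conjugating the reflection `2 φ φ† − 1` by a unitary `A` gives `2 (Aφ)(Aφ)† − 1`, and `Aφ = e_b`. -/

namespace Matrix

theorem mul_vecMulVec_star_mul_conjTranspose {n R : Type*} [Fintype n] [NonUnitalSemiring R]
    [StarRing R] (A : Matrix n n R) (v : n → R) :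
    A * vecMulVec v (star v) * Aᴴ = vecMulVec (A *ᵥ v) (star (A *ᵥ v)) := by
  rw [mul_vecMulVec, vecMulVec_mul, star_mulVec]

theorem mul_smul_vecMulVec_star_sub_one_mul_conjTranspose {n R : Type*} [Fintype n]
    [DecidableEq n] [CommRing R] [StarRing R] {A : Matrix n n R} (hA : A ∈ unitaryGroup n R)
    (c : R) (v : n → R) :
    A * (c • vecMulVec v (star v) - 1) * Aᴴ = c • vecMulVec (A *ᵥ v) (star (A *ᵥ v)) - 1 := by
  rw [mul_sub, sub_mul, Matrix.mul_smul, Matrix.smul_mul, mul_vecMulVec_star_mul_conjTranspose,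
    mul_one, ← star_eq_conjTranspose, mem_unitaryGroup_iff.mp hA]

end Matrix

theorem blockDiag_eq_reindex_blockDiagonal {N : ℕ} (B : Fin N → Matrix (Fin N) (Fin N) ℂ) :
    blockDiag B = reindexAlgEquiv ℂ ℂ (Equiv.prodComm _ _) (blockDiagonal B) := by
  ext ⟨i, k⟩ ⟨j, l⟩
  simp [_root_.blockDiag, blockDiagonal_apply]

theorem blockDiag_mul_smul_sub_one_mul_conjTranspose {N : ℕ}
    (B C : Fin N → Matrix (Fin N) (Fin N) ℂ) (c : ℂ) :
    blockDiag B * (c • blockDiag C - 1) * (blockDiag B)ᴴ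
      = _root_.blockDiag fun i => B i * (c • C i - 1) * (B i)ᴴ := by
  simp only [blockDiag_eq_reindex_blockDiagonal]
  set e := reindexAlgEquiv ℂ ℂ (Equiv.prodComm (Fin N) (Fin N))
  rw [show ∀ M, (e M)ᴴ = e Mᴴ from fun _ => rfl, ← map_smul, ← map_one e, ← map_sub, ← map_mul,
    ← map_mul, blockDiagonal_conjTranspose, ← blockDiagonal_smul, ← blockDiagonal_one,
    ← blockDiagonal_sub, ← blockDiagonal_mul, ← blockDiagonal_mul]
  rfl

theorem szegedyProj_eq_blockDiag {N : ℕ} (P : Matrix (Fin N) (Fin N) ℝ) :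
    szegedyProj P = _root_.blockDiag fun i => vecMulVec (colState P i) (star (colState P i)) := by
  ext ⟨i, k⟩ ⟨j, l⟩
  simp only [szegedyProj, Matrix.sum_apply, of_apply, projState, _root_.blockDiag,
    vecMulVec_apply, Pi.star_apply, map_mul, starRingEnd_apply]
  split_ifs with h
  · subst h; simp
  · simp [h]

theorem diagD_eq_blockDiag (N : ℕ) (b : Fin N) :
    diagD N b = _root_.blockDiag fun _ =>
      (2 : ℂ) • vecMulVec (Pi.single b 1) (star (Pi.single b 1)) - 1 := by
  ext ⟨i, k⟩ ⟨j, l⟩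
  by_cases h : i = j
  · subst h
    simp only [diagD, _root_.blockDiag, of_apply, if_true, Matrix.sub_apply, Matrix.smul_apply,
      vecMulVec_apply, Pi.star_apply, Pi.single_apply, one_apply]
    split_ifs <;> simp
  · simp [diagD, _root_.blockDiag, h]

theorem szegedyReflection_diagonalization_general (N : ℕ)
    (P : Matrix (Fin N) (Fin N) ℝ)
    (Ui : Fin N → Matrix (Fin N) (Fin N) ℂ)
    (hUi : ∀ i, Ui i ∈ Matrix.unitaryGroup (Fin N) ℂ)
    (b : Fin N)
    (hb : ∀ i, (Ui i).mulVec (colState P i) = Pi.single b 1) :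
    blockDiag Ui * ((2 : ℂ) • szegedyProj P - 1) * (blockDiag Ui)ᴴ
      = diagD N b := by
  rw [szegedyProj_eq_blockDiag, blockDiag_mul_smul_sub_one_mul_conjTranspose, diagD_eq_blockDiag]
  refine congrArg _root_.blockDiag (funext fun i => ?_)
  rw [mul_smul_vecMulVec_star_sub_one_mul_conjTranspose (hUi i), hb i]

/-- Diagonalization of the Szegedy reflection by a block-diagonal unitary:
if each `U_i` is unitary and `U_i φ_i = e_b` for a fixed basis index `b`, then
`U(2Π − I)U† = I_N ⊗ (2 e_b e_b† − I_N)`. -/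
theorem szegedyReflection_diagonalization (N : ℕ) (hN : 1 ≤ N)
    (P : Matrix (Fin N) (Fin N) ℝ)
    (hnonneg : ∀ j i, 0 ≤ P j i) (hcol : ∀ i, ∑ j, P j i = 1)
    (Ui : Fin N → Matrix (Fin N) (Fin N) ℂ)
    (hUi : ∀ i, Ui i ∈ Matrix.unitaryGroup (Fin N) ℂ)
    (b : Fin N)
    (hb : ∀ i, (Ui i).mulVec (colState P i) = Pi.single b 1) :
    blockDiag Ui * ((2 : ℂ) • szegedyProj P - 1) * (blockDiag Ui)ᴴ
      = diagD N b :=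
  szegedyReflection_diagonalization_general N P Ui hUi b hb
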